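/- arXiv:1707.01328 — 2 statements merged into one kernel-verified Lean document; each statement's English description precedes it below -/
import Mathlib

section
/- Let T be a torus with a finite-order automorphism σ. If σ permutes a basis of the character lattice X(T), then the fixed-point subgroup T^σ is connected. -/
/-! Torus model: `T = Hom(X, kˣ)` with `X` the character lattice; a finite-order
automorphism `σ` of `X` acts on points by precomposition.  Connectedness of the fixed
subgroup `T^σ` means that it coincides with its identity component, i.e. that it is a
divisible group. -/

abbrev TorusPts (X : Type*) [AddCommGroup X] (k : Type*) [Field k] :=
  X →+ Additive kˣ

def precomp {X : Type*} [AddCommGroup X] (k : Type*) [Field k] (f : X →+ X) :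
    TorusPts X k →+ TorusPts X k where
  toFun t := t.comp f
  map_zero' := by ext x; simp
  map_add' t s := by ext x; simp

def fixedSub {X : Type*} [AddCommGroup X] (k : Type*) [Field k] (σ : X →+ X) :
    AddSubgroup (TorusPts X k) :=
  AddMonoidHom.ker (precomp k σ - AddMonoidHom.id _)

/-! A fixed point `t` of `σ` is determined by its values on the basis `b`, and fixedness only
says that `t (b (e i)) = t (b i)`. Choosing the `m`-th root of `t (b i)` as a function of
that value alone (possible since `k` is algebraically closed) therefore gives a point `s`
that is again fixed, with `m • s = t`: the fixed subgroup is divisible. -/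

theorem mem_fixedSub_iff {X : Type*} [AddCommGroup X] {k : Type*} [Field k] {σ : X →+ X}
    {t : TorusPts X k} : t ∈ fixedSub k σ ↔ t.comp σ = t :=
  sub_eq_zero

theorem IsAlgClosed.nsmul_surjective_additive_units (k : Type*) [Field k] [IsAlgClosed k]
    {m : ℕ} (hm : 0 < m) : Function.Surjective fun u : Additive kˣ => m • u := by
  intro u
  obtain ⟨z, hz⟩ := IsAlgClosed.exists_pow_nat_eq (u.toMul : k) hm
  have hz0 : z ≠ 0 := by
    rintro rfl
    exact u.toMul.ne_zero (by rw [← hz, zero_pow hm.ne'])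
  exact ⟨.ofMul (Units.mk0 z hz0), Additive.toMul.injective (Units.ext (by simpa using hz))⟩

namespace Module.Basis

variable {ι X A : Type*} [AddCommGroup X] [Module ℤ X] [AddCommGroup A]

theorem addMonoidHom_ext (b : Basis ι ℤ X) {f g : X →+ A} (h : ∀ i, f (b i) = g (b i)) :
    f = g := by
  obtain rfl : ‹Module ℤ X› = AddCommGroup.toIntModule X := Subsingleton.elim _ _
  exact AddMonoidHom.toIntLinearMap_injective (b.ext h)

theorem exists_comp_eq_self_nsmul_eq (b : Basis ι ℤ X) {σ : X →+ X} {e : ι → ι}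
    (hσ : ∀ i, σ (b i) = b (e i)) {m : ℕ} (hA : Function.Surjective fun a : A => m • a)
    {t : X →+ A} (ht : t.comp σ = t) : ∃ s : X →+ A, s.comp σ = s ∧ m • s = t := by
  let root := Function.surjInv hA
  let s : X →+ A := (b.constr ℤ fun i => root (t (b i))).toAddMonoidHom
  have hs : ∀ i, s (b i) = root (t (b i)) := fun i => b.constr_basis ℤ _ i
  have ht' : ∀ i, t (b (e i)) = t (b i) := fun i => by
    rw [← hσ, ← AddMonoidHom.comp_apply, ht]
  refine ⟨s, b.addMonoidHom_ext fun i => ?_, b.addMonoidHom_ext fun i => ?_⟩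
  · rw [AddMonoidHom.comp_apply, hσ, hs, hs, ht']
  · rw [AddMonoidHom.nsmul_apply, hs]
    exact Function.surjInv_eq hA _

end Module.Basis

theorem fixedSub_connected_of_permutes_basis_general
    {k : Type*} [Field k] [IsAlgClosed k]
    {X : Type*} [AddCommGroup X] [Module ℤ X]
    (σ : AddAut X)
    {ι : Type*} (b : Module.Basis ι ℤ X) (e : Equiv.Perm ι)
    (hperm : ∀ i, σ (b i) = b (e i)) :
    ∀ t ∈ fixedSub k ((σ : AddAut X) : X →+ X), ∀ m : ℕ, 0 < m →
      ∃ s ∈ fixedSub k ((σ : AddAut X) : X →+ X), m • s = t := by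
  intro t ht m hm
  obtain ⟨s, hs, hst⟩ := b.exists_comp_eq_self_nsmul_eq (σ := (σ : X →+ X)) hperm
    (IsAlgClosed.nsmul_surjective_additive_units k hm) (mem_fixedSub_iff.mp ht)
  exact ⟨s, mem_fixedSub_iff.mpr hs, hst⟩

/-- Let `T` be a torus with a finite-order automorphism `σ`.  If `σ`
permutes a basis of the character lattice `X(T)`, then the fixed-point subgroup `T^σ`
is connected (equivalently, divisible). -/
theorem fixedSub_connected_of_permutes_basis
    {k : Type*} [Field k] [IsAlgClosed k]
    {X : Type*} [AddCommGroup X] [Module ℤ X] [Module.Free ℤ X] [Module.Finite ℤ X]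
    (σ : AddAut X) (n : ℕ) (hn : 0 < n) (hord : addOrderOf σ = n)
    {ι : Type*} (b : Module.Basis ι ℤ X) (e : Equiv.Perm ι)
    (hperm : ∀ i, σ (b i) = b (e i)) :
    ∀ t ∈ fixedSub k ((σ : AddAut X) : X →+ X), ∀ m : ℕ, 0 < m →
      ∃ s ∈ fixedSub k ((σ : AddAut X) : X →+ X), m • s = t :=
  fixedSub_connected_of_permutes_basis_general σ b e hperm
end

section
/- Let T be a torus with a finite-order automorphism σ of order n, and let [T,σ] denote the subtorus {t·σ(t)⁻¹ : t ∈ T}. Then: (a) every element of the finite group [T,σ] ∩ T^σ has order dividing n; (b) T = [T,σ]·(T^σ)⁰; (c) the cocharacter lattice of [T,σ] equals Ker(1 + σ + ... + σ^{n-1} | Y(T)). -/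
def divPart (A : Type*) [AddCommGroup A] : AddSubgroup A :=
  ⨆ H ∈ {H : AddSubgroup A | ∀ m : ℕ, 0 < m → ∀ x ∈ H, ∃ y ∈ H, m • y = x}, H

/-- The subtorus `[T,σ]`, image of `t ↦ t ⋅ σ(t)⁻¹`. -/
def commSub {X : Type*} [AddCommGroup X] (k : Type*) [Field k] (σ : X →+ X) :
    AddSubgroup (TorusPts X k) :=
  AddMonoidHom.range (precomp k σ - AddMonoidHom.id _)

/-- The point of `T` attached to a cocharacter `y ∈ Y(T) = Hom(X, ℤ)` and `λ ∈ kˣ`. -/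
def cochar {X : Type*} [AddCommGroup X] [Module ℤ X] {k : Type*} [Field k]
    (y : X →ₗ[ℤ] ℤ) (lam : kˣ) : TorusPts X k where
  toFun χ := Additive.ofMul (lam ^ (y χ))
  map_zero' := by simp
  map_add' χ χ' := by simp [map_add, zpow_add]

/-! Write `S` for the action of `σ` on `T` and `N = 1 + S + ⋯ + S^{n-1}`. Since `S^n = 1`,
`N (S - 1) = (S - 1) N = 0`, so `[T,σ] ⊆ ker N` and `N T ⊆ T^σ`; and the ring identity
`n - N = (S - 1) ∑_{i<n} ∑_{j<i} S^j` puts `n t - N t` in `[T,σ]` for every `t`.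
(a) On `T^σ` the norm `N` is multiplication by `n`, and it vanishes on `[T,σ]`.
(b) `T` is divisible: writing `t = n s`, `t = (n s - N s) + N s`, and `N T` is a divisible
subgroup of `T^σ`.
(c) `N` maps the cocharacter `y` to `y ∘ (1 + σ + ⋯ + σ^{n-1})`, and a cocharacter that is
trivial on all of `kˣ` is zero because `k` is infinite. Conversely, if `N` kills `y`, then
`cochar y λ = n • cochar y μ` with `μ^n = λ` lies in `[T,σ]`. -/

open Finset

theorem sub_one_mul_sum_geom_sum {R : Type*} [Ring R] (x : R) (n : ℕ) :
    (x - 1) * ∑ i ∈ range n, ∑ j ∈ range i, x ^ j = ∑ i ∈ range n, x ^ i - n := by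
  rw [mul_sum]
  simp [mul_geom_sum]

section Endomorphism

variable {A : Type*} [AddCommGroup A] (S : AddMonoid.End A) (n : ℕ)

theorem geom_sum_apply_eq_zero_of_mem_range (hS : S ^ n = 1) {t : A}
    (ht : t ∈ (S - 1).range) : (∑ i ∈ range n, S ^ i) t = 0 := by
  obtain ⟨u, rfl⟩ := ht
  change ((∑ i ∈ range n, S ^ i) * (S - 1)) u = 0
  rw [geom_sum_mul, hS, sub_self]
  rfl

theorem geom_sum_apply_mem_ker (hS : S ^ n = 1) (t : A) :
    (∑ i ∈ range n, S ^ i) t ∈ (S - 1).ker := by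
  change ((S - 1) * ∑ i ∈ range n, S ^ i) t = 0
  rw [mul_geom_sum, hS, sub_self]
  rfl

theorem geom_sum_apply_of_mem_ker {t : A} (ht : t ∈ (S - 1).ker) :
    (∑ i ∈ range n, S ^ i) t = n • t := by
  have hfix : S t = t := sub_eq_zero.mp ht
  calc (∑ i ∈ range n, S ^ i) t = ∑ i ∈ range n, (S ^ i) t :=
        AddMonoidHom.finsetSum_apply _ _ _
    _ = ∑ _i ∈ range n, t :=
      sum_congr rfl fun i _ => by rw [AddMonoid.End.coe_pow, Function.iterate_fixed hfix]
    _ = n • t := by simp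

theorem nsmul_sub_geom_sum_apply_mem_range (t : A) :
    n • t - (∑ i ∈ range n, S ^ i) t ∈ (S - 1).range := by
  refine ⟨(-∑ i ∈ range n, ∑ j ∈ range i, S ^ j) t, ?_⟩
  change ((S - 1) * -∑ i ∈ range n, ∑ j ∈ range i, S ^ j) t = _
  rw [mul_neg, sub_one_mul_sum_geom_sum, neg_sub]
  change (n : AddMonoid.End A) t - (∑ i ∈ range n, S ^ i) t = _
  rw [AddMonoid.End.natCast_apply]

theorem nsmul_eq_zero_of_mem_range_inf_ker (hS : S ^ n = 1) {t : A}
    (ht : t ∈ (S - 1).range ⊓ (S - 1).ker) : n • t = 0 := by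
  rw [← geom_sum_apply_of_mem_ker S n ht.2]
  exact geom_sum_apply_eq_zero_of_mem_range S n hS ht.1

end Endomorphism

theorem le_divPart {A : Type*} [AddCommGroup A] {H : AddSubgroup A}
    (hH : ∀ m : ℕ, 0 < m → ∀ x ∈ H, ∃ y ∈ H, m • y = x) : H ≤ divPart A :=
  le_iSup₂ (f := fun H _ => H) H hH

theorem AddMonoidHom.range_le_divPart {A B : Type*} [AddCommGroup A] [AddCommGroup B]
    (f : A →+ B) (hA : ∀ m : ℕ, 0 < m → ∀ a : A, ∃ b, m • b = a) : f.range ≤ divPart B :=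
  le_divPart fun m hm _ ⟨a, ha⟩ =>
    let ⟨b, hb⟩ := hA m hm a
    ⟨f b, ⟨b, rfl⟩, by rw [← map_nsmul, hb, ha]⟩

theorem sub_one_range_sup_map_divPart_ker_eq_top {A : Type*} [AddCommGroup A]
    (S : AddMonoid.End A) {n : ℕ} (hn : 0 < n) (hS : S ^ n = 1)
    (hA : ∀ m : ℕ, 0 < m → ∀ a : A, ∃ b, m • b = a) :
    (S - 1).range ⊔ AddSubgroup.map (S - 1).ker.subtype (divPart (S - 1).ker) = ⊤ := by
  refine eq_top_iff.mpr fun t _ => ?_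
  obtain ⟨s, rfl⟩ := hA n hn t
  set N : AddMonoid.End A := ∑ i ∈ range n, S ^ i
  let N' : A →+ (S - 1).ker := N.codRestrict _ (geom_sum_apply_mem_ker S n hS)
  have hNs : N s ∈ AddSubgroup.map (S - 1).ker.subtype (divPart (S - 1).ker) :=
    ⟨N' s, N'.range_le_divPart hA ⟨s, rfl⟩, rfl⟩
  rw [← sub_add_cancel (n • s) (N s)]
  exact add_mem (AddSubgroup.mem_sup_left (nsmul_sub_geom_sum_apply_mem_range S n s))
    (AddSubgroup.mem_sup_right hNs)

theorem exists_units_pow_eq {k : Type*} [Field k] [IsAlgClosed k] {n : ℕ} (hn : 0 < n)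
    (lam : kˣ) : ∃ μ : kˣ, μ ^ n = lam := by
  obtain ⟨z, hz⟩ := IsAlgClosed.exists_pow_nat_eq (lam : k) hn
  have hz0 : z ≠ 0 := by
    rintro rfl
    exact lam.ne_zero (by rw [← hz, zero_pow hn.ne'])
  exact ⟨Units.mk0 z hz0, Units.ext (by simpa using hz)⟩

theorem eq_zero_of_forall_units_zpow_eq_one {k : Type*} [Field k] [Infinite k] {c : ℤ}
    (h : ∀ lam : kˣ, lam ^ c = 1) : c = 0 := by
  classical
  by_contra hc
  have hroots : ({0}ᶜ : Set k) ⊆ (Polynomial.nthRoots c.natAbs (1 : k)).toFinset := by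
    intro x (hx : x ≠ 0)
    have hpow := congrArg Units.val (pow_natAbs_eq_one.mpr (h (Units.mk0 x hx)))
    rw [Units.val_pow_eq_pow_val, Units.val_mk0, Units.val_one] at hpow
    rw [Finset.mem_coe, Multiset.mem_toFinset, Polynomial.mem_nthRoots (Int.natAbs_pos.mpr hc)]
    exact hpow
  exact (Set.finite_singleton (0 : k)).infinite_compl ((Finset.finite_toSet _).subset hroots)

theorem AddMonoidHom.exists_nsmul_eq_of_free {X B : Type*} [AddCommGroup X] [Module.Free ℤ X]
    [AddCommGroup B] {n : ℕ} (hB : ∀ b : B, ∃ c, n • c = b) (t : X →+ B) :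
    ∃ s : X →+ B, n • s = t := by
  let b := Module.Free.chooseBasis ℤ X
  choose u hu using fun i => hB (t (b i))
  refine ⟨(b.constr ℤ u).toAddMonoidHom, ?_⟩
  suffices (n • b.constr ℤ u : X →ₗ[ℤ] B) = t.toIntLinearMap from
    AddMonoidHom.ext fun x => LinearMap.congr_fun this x
  exact b.ext fun i => by simp [hu]

section Torus

variable {X : Type*} [AddCommGroup X] {k : Type*} [Field k]

abbrev precompEnd (k : Type*) [Field k] (f : X →+ X) : AddMonoid.End (TorusPts X k) :=
  precomp k f

theorem commSub_eq_range (f : X →+ X) :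
    commSub k f = (precompEnd k f - 1).range := rfl

theorem fixedSub_eq_ker (f : X →+ X) :
    fixedSub k f = (precompEnd k f - 1).ker := rfl

theorem precompEnd_nsmul (σ : AddAut X) (i : ℕ) :
    precompEnd k ((i • σ : AddAut X) : X →+ X) = precompEnd k (σ : X →+ X) ^ i := by
  induction i with
  | zero => rfl
  | succ i ih =>
    rw [pow_succ, ← ih, succ_nsmul']
    rfl

theorem precompEnd_pow_eq_one {σ : AddAut X} {n : ℕ} (hσ : n • σ = 0) :
    precompEnd k (σ : X →+ X) ^ n = 1 := by
  rw [← precompEnd_nsmul, hσ]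
  rfl

theorem TorusPts.exists_nsmul_eq [IsAlgClosed k] [Module.Free ℤ X] {m : ℕ} (hm : 0 < m)
    (t : TorusPts X k) : ∃ s, m • s = t :=
  AddMonoidHom.exists_nsmul_eq_of_free (fun a =>
    let ⟨μ, hμ⟩ := exists_units_pow_eq hm (Additive.toMul a)
    ⟨Additive.ofMul μ, by rw [← ofMul_pow, hμ]; rfl⟩) t

@[simp] theorem cochar_apply (y : X →ₗ[ℤ] ℤ) (lam : kˣ) (χ : X) :
    cochar y lam χ = Additive.ofMul (lam ^ y χ) := rfl

theorem precomp_cochar (f : X →+ X) (y : X →ₗ[ℤ] ℤ) (lam : kˣ) :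
    precomp k f (cochar y lam) = cochar (y ∘ₗ f.toIntLinearMap) lam := rfl

theorem nsmul_cochar (n : ℕ) (y : X →ₗ[ℤ] ℤ) (lam : kˣ) :
    n • cochar y lam = cochar y (lam ^ n) := by
  ext χ
  simp [← zpow_natCast, ← zpow_mul, mul_comm]

theorem cochar_sum {ι : Type*} (s : Finset ι) (y : ι → X →ₗ[ℤ] ℤ) (lam : kˣ) :
    cochar (∑ i ∈ s, y i) lam = ∑ i ∈ s, cochar (y i) lam :=
  map_sum (AddMonoidHom.mk' (fun y => (cochar y lam : TorusPts X k))
    fun _ _ => by ext; simp [zpow_add]) y s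

theorem eq_zero_of_forall_cochar_eq_zero [Infinite k] {y : X →ₗ[ℤ] ℤ}
    (h : ∀ lam : kˣ, (cochar y lam : TorusPts X k) = 0) : y = 0 :=
  LinearMap.ext fun χ => eq_zero_of_forall_units_zpow_eq_one fun lam =>
    Additive.ofMul.injective (DFunLike.congr_fun (h lam) χ)

theorem geom_sum_precomp_cochar (σ : AddAut X) (n : ℕ) (y : X →ₗ[ℤ] ℤ) (lam : kˣ) :
    (∑ i ∈ range n, precompEnd k (σ : X →+ X) ^ i) (cochar y lam) =
      cochar (∑ i ∈ range n, y ∘ₗ (((i • σ : AddAut X) : X →+ X).toIntLinearMap)) lam := by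
  rw [cochar_sum]
  refine (AddMonoidHom.finsetSum_apply _ _ _).trans (sum_congr rfl fun i _ => ?_)
  rw [← precompEnd_nsmul]
  rfl

theorem forall_cochar_mem_commSub_iff [IsAlgClosed k] {σ : AddAut X} {n : ℕ} (hn : 0 < n)
    (hσ : n • σ = 0) (y : X →ₗ[ℤ] ℤ) :
    (∀ lam : kˣ, (cochar y lam : TorusPts X k) ∈ commSub k (σ : X →+ X)) ↔
      ∑ i ∈ range n, y ∘ₗ (((i • σ : AddAut X) : X →+ X).toIntLinearMap) = 0 := by
  rw [commSub_eq_range]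
  set S := precompEnd k (σ : X →+ X)
  constructor
  · intro h
    refine eq_zero_of_forall_cochar_eq_zero (k := k) fun lam => ?_
    rw [← geom_sum_precomp_cochar]
    exact geom_sum_apply_eq_zero_of_mem_range S n (precompEnd_pow_eq_one hσ) (h lam)
  · intro hy lam
    obtain ⟨μ, rfl⟩ := exists_units_pow_eq hn lam
    have hnorm : (∑ i ∈ range n, S ^ i) (cochar y μ) = 0 := by
      rw [geom_sum_precomp_cochar, hy]
      ext; simp
    convert nsmul_sub_geom_sum_apply_mem_range S n (cochar y μ) using 1
    rw [hnorm, nsmul_cochar]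
    exact (sub_zero (cochar y (μ ^ n) : TorusPts X k)).symm

end Torus

theorem commSub_inter_fixed_and_decomposition_and_cocharacters_general
    {k : Type*} [Field k] [IsAlgClosed k]
    {X : Type*} [AddCommGroup X] [Module.Free ℤ X]
    (σ : AddAut X) (n : ℕ) (hn : 0 < n) (hord : addOrderOf σ = n) :
    (∀ t ∈ commSub k ((σ : AddAut X) : X →+ X) ⊓
        fixedSub k ((σ : AddAut X) : X →+ X), n • t = 0) ∧
    (commSub k ((σ : AddAut X) : X →+ X) ⊔
        AddSubgroup.map (fixedSub k ((σ : AddAut X) : X →+ X)).subtype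
          (divPart (fixedSub k ((σ : AddAut X) : X →+ X))) = ⊤) ∧
    (∀ y : X →ₗ[ℤ] ℤ,
        (∀ lam : kˣ, (cochar y lam : TorusPts X k) ∈ commSub k ((σ : AddAut X) : X →+ X))
          ↔ (∑ i ∈ Finset.range n,
              y ∘ₗ (((i • σ : AddAut X) : X →+ X).toIntLinearMap)) = 0) := by
  have hσ : n • σ = 0 := hord ▸ addOrderOf_nsmul_eq_zero σ
  have hS : precompEnd k (σ : X →+ X) ^ n = 1 := precompEnd_pow_eq_one hσ
  rw [commSub_eq_range, fixedSub_eq_ker]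
  exact ⟨fun t => nsmul_eq_zero_of_mem_range_inf_ker _ n hS,
    sub_one_range_sup_map_divPart_ker_eq_top _ hn hS fun _ => TorusPts.exists_nsmul_eq,
    forall_cochar_mem_commSub_iff hn hσ⟩

/-- Let `T` be a torus with a finite-order automorphism `σ` of order
`n` and let `[T,σ] = {t ⋅ σ(t)⁻¹}`.  Then (a) every element of `[T,σ] ∩ T^σ` has order
dividing `n`; (b) `T = [T,σ] ⋅ (T^σ)⁰`; (c) the cocharacter lattice of `[T,σ]` equals
`Ker (1 + σ + ⋯ + σ^{n-1} | Y(T))`. -/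
theorem commSub_inter_fixed_and_decomposition_and_cocharacters
    {k : Type*} [Field k] [IsAlgClosed k]
    {X : Type*} [AddCommGroup X] [Module.Free ℤ X] [Module.Finite ℤ X]
    (σ : AddAut X) (n : ℕ) (hn : 0 < n) (hord : addOrderOf σ = n) :
    (∀ t ∈ commSub k ((σ : AddAut X) : X →+ X) ⊓
        fixedSub k ((σ : AddAut X) : X →+ X), n • t = 0) ∧
    (commSub k ((σ : AddAut X) : X →+ X) ⊔
        AddSubgroup.map (fixedSub k ((σ : AddAut X) : X →+ X)).subtype
          (divPart (fixedSub k ((σ : AddAut X) : X →+ X))) = ⊤) ∧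
    (∀ y : X →ₗ[ℤ] ℤ,
        (∀ lam : kˣ, (cochar y lam : TorusPts X k) ∈ commSub k ((σ : AddAut X) : X →+ X))
          ↔ (∑ i ∈ Finset.range n,
              y ∘ₗ (((i • σ : AddAut X) : X →+ X).toIntLinearMap)) = 0) :=
  commSub_inter_fixed_and_decomposition_and_cocharacters_general σ n hn hord
end
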